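/- arXiv:0806.1500 — 4 statements merged into one kernel-verified Lean document; each statement's English description precedes it below -/
import Mathlib

section
/- For compositions α and β, if β covers α in the composition order of Björner–Stanley (β is obtained from α either by adding 1 to a part, or by replacing a part α_i by the two consecutive parts (α_i+1−h, h) with 1 ≤ h ≤ α_i), then φ(α) is a subword of φ(β), where φ sends each part k to a·b^{k-1}, concatenates, and omits the initial a. -/
open List

def phi (l : List ℕ+) : List Bool :=
  ((l.map (fun k => true :: List.replicate ((k : ℕ) - 1) false)).flatten).tail

/-- The Björner–Stanley covering relation on compositions: `β` covers `α` iff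
`β` is obtained from `α` by adding `1` to a part, or by replacing a part `x`
by the two consecutive parts `(x + 1 - h, h)` with `1 ≤ h ≤ x`. -/
def CoverC (α β : List ℕ+) : Prop :=
  (∃ (l₁ : List ℕ+) (x : ℕ+) (l₂ : List ℕ+),
      α = l₁ ++ x :: l₂ ∧ β = l₁ ++ (x + 1) :: l₂) ∨
  (∃ (l₁ : List ℕ+) (x h : ℕ+) (l₂ : List ℕ+),
      α = l₁ ++ x :: l₂ ∧ h ≤ x ∧ β = l₁ ++ (x + 1 - h) :: h :: l₂)

/-! Both covering moves replace one part `x` by parts whose words together contain the word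
`a b^{x-1}` of `x` (`a = true`, `b = false`) as a subword: `a b^x` for `x + 1`, and
`a b^{x-h} a b^{h-1}` for `(x + 1 - h, h)`. Since the subword order is compatible with concatenation and with deleting
the first letter, the subword relation passes to `φ`. -/

def partWord (k : ℕ+) : List Bool :=
  true :: replicate ((k : ℕ) - 1) false

/-- The binder of the lambda in `phi` has type `ℕ`, so `phi` first coerces `l` to `List ℕ`
through the list monad; this lemma removes that detour. -/
theorem phi_eq_tail_flatMap (l : List ℕ+) : phi l = (l.flatMap partWord).tail := by
  simp only [phi, pure_def, bind_eq_flatMap]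
  rw [← map_eq_flatMap, map_map]
  rfl

theorem partWord_sublist_succ (x : ℕ+) : partWord x <+ partWord (x + 1) := by
  refine (replicate_sublist_replicate false).2 ?_ |>.cons_cons true
  simp

theorem partWord_sublist_split {x h : ℕ+} (hle : h ≤ x) :
    partWord x <+ partWord (x + 1 - h) ++ partWord h := by
  have hlt : h < x + 1 := lt_of_le_of_lt hle (PNat.lt_add_right x 1)
  have hsplit : (x : ℕ) - 1 = ((x + 1 - h : ℕ+) : ℕ) - 1 + ((h : ℕ) - 1) := by
    have hle' : (h : ℕ) ≤ x := hle
    have hpos := h.pos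
    rw [PNat.sub_coe, if_pos hlt, PNat.add_coe, PNat.val_ofNat]
    omega
  rw [partWord, partWord, partWord, hsplit, replicate_add, cons_append]
  exact ((sublist_cons_self true _).append_left _).cons_cons true

theorem phi_sublist_of_partWord_sublist (l₁ l₂ ys : List ℕ+) {x : ℕ+}
    (h : partWord x <+ ys.flatMap partWord) :
    phi (l₁ ++ x :: l₂) <+ phi (l₁ ++ ys ++ l₂) := by
  simp only [phi_eq_tail_flatMap, flatMap_append, flatMap_cons, append_assoc]
  exact ((h.append_right _).append_left _).tail

/-- If `β` covers `α` in the composition order, then `φ(α)` is a subword of `φ(β)`. -/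
theorem phi_sublist_of_cover (α β : List ℕ+) (h : CoverC α β) :
    phi α <+ phi β := by
  rcases h with ⟨l₁, x, l₂, rfl, rfl⟩ | ⟨l₁, x, h, l₂, rfl, hle, rfl⟩
  · simpa using
      phi_sublist_of_partWord_sublist l₁ l₂ [x + 1] (by simpa using partWord_sublist_succ x)
  · simpa using phi_sublist_of_partWord_sublist l₁ l₂ [x + 1 - h, h]
      (by simpa using partWord_sublist_split hle)
end

section
/- For words u ≤ w over the alphabet {a,b}, let (w choose u)_n denote the number of normal embeddings of u in w, i.e., embeddings ι with R(w) ⊆ ι where R(w) = {j : w_j = w_{j−1}} is the repetition set. Then the Möbius function of the subword order on {a,b}* satisfies μ(u,w) = (−1)^{|u|+|w|} (w choose u)_n. -/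
open List

/-- Words over the alphabet `{a,b}`: `true` encodes `a`, `false` encodes `b`. -/
abbrev Word := List Bool

/-- `s` is an embedding of `u` in `w`: listing the elements of `s` in increasing
order picks out the letters of `u` inside `w`. -/
def IsEmb (u w : Word) (s : Finset ℕ) : Prop :=
  (s.sort (· ≤ ·)).map (fun i => w[i]?) = u.map some

/-- The repetition set `R(w) = {j ≥ 1 : w_j = w_{j-1}}` (0-based positions). -/
def RepSet (w : Word) : Finset ℕ :=
  (Finset.Ico 1 w.length).filter (fun j => w[j]? = w[j-1]?)

/-- `(w choose u)_n`: number of normal embeddings of `u` in `w`, i.e.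
embeddings containing the repetition set of `w`. -/
noncomputable def nCount (u w : Word) : ℕ :=
  Nat.card {s : Finset ℕ // IsEmb u w s ∧ RepSet w ⊆ s}

/-!
By induction on `|w| - |u|` the recursion defining `μ` has at most one solution, so it suffices
that `(-1)^{|u|+|w|} (w choose u)_n` satisfies it, i.e. that
`∑_{u ≤ z ≤ w} (-1)^{|z|} (w choose z)_n = (-1)^{|w|} [u = w]`. Grouped by embeddings, the left
side is a signed sum `S(u, w)` over index sets `s ⊇ R(w)` with `u ≤ w|_s`. To recurse on the first
letter of `w = a t`, let `S_b(u, w)` require `s` to contain the repetitions of `b w` instead, for a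
letter `b` preceding `w`. Position `0` is then forced exactly when `a = b`, and when taken it
absorbs one leading `a` of `u`, so `S_b(u, a t) = [a ≠ b] S_a(u, t) - S_a(u', t)` with `u'` the
word `u` stripped of one leading `a`. This solves to `S_b(u, w) = (-1)^{|w|} [w = bⁱ u for some i]`,
and `S = S_b` for any `b` other than the first letter of `w`.
-/

theorem Finset.sum_powerset_range_succ {M : Type*} [AddCommMonoid M] (n : ℕ)
    (f : Finset ℕ → M) :
    ∑ s ∈ (range (n + 1)).powerset, f s =
      ∑ s ∈ (range n).powerset,
        (f (s.map (addRightEmbedding 1)) + f (insert 0 (s.map (addRightEmbedding 1)))) := by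
  have hrange : range (n + 1) = insert 0 ((range n).map (addRightEmbedding 1)) := range_add_one' n
  have hinj : Set.InjOn (·.image (addRightEmbedding 1)) ((range n).powerset : Set (Finset ℕ)) :=
    (image_injective (addRightEmbedding 1).injective).injOn
  rw [hrange, sum_powerset_insert (by simp), map_eq_image, powerset_image, sum_image hinj,
    sum_image hinj, ← sum_add_distrib]
  simp only [map_eq_image]

namespace List

variable {α : Type*}

theorem filterMap_getElem?_range (l : List α) : (range l.length).filterMap (l[·]?) = l := by
  induction l with
  | nil => rfl
  | cons a t ih =>
    rw [length_cons, range_succ_eq_map, filterMap_cons_some (f := fun i => (a :: t)[i]?) rfl,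
      filterMap_map]
    exact congrArg _ ih

theorem exists_cons_eq_replicate_append_iff {b : α} {t u : List α} :
    (∃ i, b :: t = replicate i b ++ u) ↔ u = b :: t ∨ ∃ i, t = replicate i b ++ u := by
  constructor
  · rintro ⟨_ | i, h⟩
    · exact Or.inl (by simpa using h.symm)
    · exact Or.inr ⟨i, by simpa [replicate_succ] using h⟩
  · rintro (rfl | ⟨i, h⟩)
    · exact ⟨0, rfl⟩
    · exact ⟨i + 1, by simp [replicate_succ, h]⟩

theorem exists_eq_replicate_append_iff_of_head?_ne {b : α} {t u : List α}
    (ht : t.head? ≠ some b) : (∃ i, t = replicate i b ++ u) ↔ u = t := by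
  refine ⟨?_, fun h => ⟨0, h ▸ rfl⟩⟩
  rintro ⟨_ | i, rfl⟩
  · rfl
  · simp [replicate_succ] at ht

variable [DecidableEq α]

def stripHead (a : α) : List α → List α
  | [] => []
  | b :: u => if b = a then u else b :: u

theorem sublist_cons_iff_stripHead {a : α} {u x : List α} :
    u <+ a :: x ↔ stripHead a u <+ x := by
  cases u with
  | nil => simp [stripHead]
  | cons b u =>
    by_cases hb : b = a
    · simp [stripHead, hb]
    · simp [stripHead, hb, sublist_cons_iff]

theorem exists_eq_replicate_append_stripHead_iff {b : α} {t u : List α} :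
    (∃ i, t = replicate i b ++ stripHead b u) ↔ ∃ i, b :: t = replicate i b ++ u := by
  by_cases hu : u.head? = some b
  · obtain ⟨u, rfl⟩ : ∃ u', u = b :: u' := by cases u <;> simp_all
    have e (i : ℕ) : replicate i b ++ b :: u = b :: (replicate i b ++ u) := by
      rw [← singleton_append, ← append_assoc, ← replicate_succ', replicate_succ, cons_append]
    simp [stripHead, e]
  · have hstrip : stripHead b u = u := by cases u <;> simp_all [stripHead]
    rw [hstrip]
    refine ⟨fun ⟨i, h⟩ => ⟨i + 1, by simp [replicate_succ, h]⟩, ?_⟩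
    rintro ⟨_ | i, h⟩
    · exact absurd (by rw [replicate_zero, nil_append] at h; rw [← h]; rfl) hu
    · exact ⟨i, by simpa [replicate_succ] using h⟩

end List

section Subword

variable {α : Type*}

def subword (w : List α) (s : Finset ℕ) : List α :=
  (s.sort (· ≤ ·)).filterMap (w[·]?)

theorem subword_cons_map_succ (a : α) (t : List α) (s : Finset ℕ) :
    subword (a :: t) (s.map (addRightEmbedding 1)) = subword t s := by
  rw [subword, subword, ← StrictMonoOn.map_finsetSort _ _ (fun _ _ _ _ h => by simpa using h),
    filterMap_map]
  rfl

theorem subword_cons_insert_zero (a : α) (t : List α) (s : Finset ℕ) :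
    subword (a :: t) (insert 0 (s.map (addRightEmbedding 1))) = a :: subword t s := by
  rw [subword, Finset.sort_insert _ (fun _ _ => Nat.zero_le _) (by simp),
    filterMap_cons_some (f := fun i => (a :: t)[i]?) rfl]
  exact congrArg _ (subword_cons_map_succ a t s)

theorem subword_sublist {w : List α} {s : Finset ℕ} (hs : s ⊆ Finset.range w.length) :
    subword w s <+ w := by
  have hsort : s.sort (· ≤ ·) <+ range w.length :=
    sublist_of_subperm_of_sortedLE (subperm_of_subset (Finset.sort_nodup _ _)
      (fun i hi => by simpa using hs ((Finset.mem_sort _).1 hi)))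
      (Finset.sortedLT_sort s).sortedLE (List.sortedLT_range _).sortedLE
  have := hsort.filterMap (w[·]?)
  rwa [filterMap_getElem?_range] at this

theorem map_some_subword {w : List α} {s : Finset ℕ} (hs : s ⊆ Finset.range w.length) :
    (subword w s).map some = (s.sort (· ≤ ·)).map (w[·]?) := by
  rw [subword, map_filterMap_some_eq_filter_map_isSome, filter_eq_self]
  intro x hx
  obtain ⟨i, hi, rfl⟩ := mem_map.1 hx
  simpa using hs ((Finset.mem_sort _).1 hi)

variable [DecidableEq α]

/-- The repetition set of `b :: w`, shifted back onto the positions of `w`. -/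
def repSetAfter (b : α) (w : List α) : Finset ℕ :=
  (Finset.range w.length).filter (fun i => w[i]? = (b :: w)[i]?)

theorem zero_mem_repSetAfter_cons {a b : α} {t : List α} :
    0 ∈ repSetAfter b (a :: t) ↔ a = b := by
  simp [repSetAfter]

theorem succ_mem_repSetAfter_cons {a b : α} {t : List α} {i : ℕ} :
    i + 1 ∈ repSetAfter b (a :: t) ↔ i ∈ repSetAfter a t := by
  simp [repSetAfter]

theorem repSetAfter_cons_subset_map {a b : α} {t : List α} {s : Finset ℕ} :
    repSetAfter b (a :: t) ⊆ s.map (addRightEmbedding 1) ↔ a ≠ b ∧ repSetAfter a t ⊆ s := by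
  constructor
  · intro h
    refine ⟨fun hab => ?_, fun i hi => ?_⟩
    · simpa using h (zero_mem_repSetAfter_cons.2 hab)
    · simpa using h (succ_mem_repSetAfter_cons.2 hi)
  · rintro ⟨hab, h⟩ (_ | i) hi
    · exact absurd (zero_mem_repSetAfter_cons.1 hi) hab
    · simpa using h (succ_mem_repSetAfter_cons.1 hi)

theorem repSetAfter_cons_subset_insert {a b : α} {t : List α} {s : Finset ℕ} :
    repSetAfter b (a :: t) ⊆ insert 0 (s.map (addRightEmbedding 1)) ↔ repSetAfter a t ⊆ s := by
  constructor
  · intro h i hi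
    simpa using h (succ_mem_repSetAfter_cons.2 hi)
  · rintro h (_ | i) hi
    · simp
    · simpa using h (succ_mem_repSetAfter_cons.1 hi)

def normalAltSum (b : α) (u w : List α) : ℤ :=
  ∑ s ∈ (Finset.range w.length).powerset,
    if repSetAfter b w ⊆ s ∧ u <+ subword w s then (-1) ^ (subword w s).length else 0

theorem normalAltSum_nil (b : α) (u : List α) :
    normalAltSum b u [] = if u = [] then 1 else 0 := by
  rw [normalAltSum, length_nil, Finset.range_zero, Finset.powerset_empty, Finset.sum_singleton]
  simp [subword, repSetAfter]

theorem normalAltSum_cons (a b : α) (u t : List α) :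
    normalAltSum b u (a :: t) =
      (if a = b then 0 else normalAltSum a u t) - normalAltSum a (stripHead a u) t := by
  rw [normalAltSum, length_cons, Finset.sum_powerset_range_succ, Finset.sum_add_distrib,
    sub_eq_add_neg, normalAltSum, normalAltSum, ← Finset.sum_neg_distrib]
  congr 1
  · simp only [repSetAfter_cons_subset_map, subword_cons_map_succ]
    by_cases hab : a = b
    · simp [hab]
    · simp only [ne_eq, hab, not_false_eq_true, true_and, if_false]
  · refine Finset.sum_congr rfl fun s _ => ?_
    simp only [repSetAfter_cons_subset_insert, subword_cons_insert_zero,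
      sublist_cons_iff_stripHead, length_cons, pow_succ]
    split_ifs <;> ring

open Classical in
theorem normalAltSum_eq (b : α) (u w : List α) :
    normalAltSum b u w = if ∃ i, w = replicate i b ++ u then (-1) ^ w.length else 0 := by
  induction w generalizing b u with
  | nil => simp [normalAltSum_nil]
  | cons a t ih =>
    rw [normalAltSum_cons, ih, ih, exists_eq_replicate_append_stripHead_iff, length_cons,
      pow_succ]
    by_cases hab : a = b
    · subst hab
      rw [if_pos rfl, exists_cons_eq_replicate_append_iff]
      split_ifs <;> ring
    · rw [if_neg hab,
        exists_eq_replicate_append_iff_of_head?_ne (b := b) (t := a :: t) (by simpa using hab),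
        exists_cons_eq_replicate_append_iff]
      by_cases hu : u = a :: t
      · have : ¬ ∃ i, t = replicate i a ++ u := by
          rintro ⟨i, h⟩
          have := congrArg length h
          simp only [hu, length_append, length_replicate, length_cons] at this
          omega
        rw [if_neg this, if_pos (Or.inl hu), if_pos hu]
        ring
      · simp only [hu, false_or, if_false]
        ring

end Subword

theorem repSetAfter_eq_repSet {c : Bool} {w : Word} (hc : w.head? ≠ some c) :
    repSetAfter c w = RepSet w := by
  ext (_ | i)
  · cases w <;> simp_all [repSetAfter, RepSet]
  · simp [repSetAfter, RepSet]

theorem isEmb_iff {u w : Word} {s : Finset ℕ} :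
    IsEmb u w s ↔ s ⊆ Finset.range w.length ∧ subword w s = u := by
  have hinj : Function.Injective (map (some : Bool → Option Bool)) :=
    map_injective_iff.2 (Option.some_injective _)
  constructor
  · intro h
    have hs : s ⊆ Finset.range w.length := by
      intro i hi
      have : w[i]? ∈ u.map some := h ▸ mem_map_of_mem ((Finset.mem_sort _).2 hi)
      obtain ⟨x, -, hx⟩ := mem_map.1 this
      simpa using (List.getElem?_eq_some_iff.1 hx.symm).1
    exact ⟨hs, hinj (by rw [map_some_subword hs]; exact h)⟩
  · rintro ⟨hs, rfl⟩
    exact (map_some_subword hs).symm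

open Finset in
theorem nCount_eq_card (z w : Word) :
    nCount z w = #{s ∈ (Finset.range w.length).powerset | RepSet w ⊆ s ∧ subword w s = z} := by
  rw [nCount, ← Nat.card_eq_finsetCard]
  refine Nat.card_congr (Equiv.subtypeEquivRight fun s => ?_)
  rw [isEmb_iff, Finset.mem_filter, Finset.mem_powerset]
  tauto

theorem sum_sublists_sign_mul_nCount_eq_normalAltSum {c : Bool} {w : Word}
    (hc : w.head? ≠ some c) (u : Word) :
    ∑ z ∈ w.sublists.toFinset with u <+ z, (-1) ^ z.length * (nCount z w : ℤ) =
      normalAltSum c u w := by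
  rw [normalAltSum, repSetAfter_eq_repSet hc, ← Finset.sum_filter,
    ← Finset.sum_fiberwise_of_maps_to (g := subword w) (t := w.sublists.toFinset.filter (u <+ ·))]
  · refine Finset.sum_congr rfl fun z hz => ?_
    have huz : u <+ z := (Finset.mem_filter.1 hz).2
    have hfiber : {s ∈ (Finset.range w.length).powerset |
          (RepSet w ⊆ s ∧ u <+ subword w s) ∧ subword w s = z} =
        {s ∈ (Finset.range w.length).powerset | RepSet w ⊆ s ∧ subword w s = z} :=
      Finset.filter_congr fun s _ =>
        ⟨fun ⟨⟨hR, _⟩, hs⟩ => ⟨hR, hs⟩, fun ⟨hR, hs⟩ => ⟨⟨hR, hs ▸ huz⟩, hs⟩⟩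
    rw [Finset.filter_filter, hfiber, nCount_eq_card,
      Finset.sum_congr rfl fun s hs => by rw [(Finset.mem_filter.1 hs).2.2],
      Finset.sum_const, nsmul_eq_mul, mul_comm]
  · intro s hs
    obtain ⟨hs, -, hus⟩ := Finset.mem_filter.1 hs
    simpa using And.intro (subword_sublist (Finset.mem_powerset.1 hs)) hus

theorem sum_sublists_sign_mul_nCount (u w : Word) :
    ∑ z ∈ w.sublists.toFinset with u <+ z, (-1) ^ z.length * (nCount z w : ℤ) =
      if u = w then (-1) ^ w.length else 0 := by
  obtain ⟨c, hc⟩ : ∃ c, w.head? ≠ some c := ⟨!(w.headD true), by cases w <;> simp⟩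
  rw [sum_sublists_sign_mul_nCount_eq_normalAltSum hc, normalAltSum_eq,
    exists_eq_replicate_append_iff_of_head?_ne hc]
  congr

theorem filter_sublist_sublists_eq_singleton (w : Word) :
    w.sublists.toFinset.filter (w <+ ·) = {w} := by
  ext z
  simp only [Finset.mem_filter, mem_toFinset, mem_sublists, Finset.mem_singleton]
  exact ⟨fun ⟨hzw, hwz⟩ => hzw.antisymm hwz, fun h => h ▸ ⟨Sublist.refl z, Sublist.refl z⟩⟩

theorem nCount_self (w : Word) : nCount w w = 1 := by
  have h := sum_sublists_sign_mul_nCount w w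
  rw [filter_sublist_sublists_eq_singleton, Finset.sum_singleton, if_pos rfl] at h
  exact_mod_cast (mul_eq_left₀ (pow_ne_zero _ (by norm_num))).1 h

theorem eq_of_sum_sublists_eq_zero {f g : Word → Word → ℤ}
    (hf₁ : ∀ x, f x x = 1)
    (hf₂ : ∀ x y : Word, x <+ y → x ≠ y →
      ∑ z ∈ y.sublists.toFinset.filter (fun z => x <+ z), f z y = 0)
    (hg₁ : ∀ x, g x x = 1)
    (hg₂ : ∀ x y : Word, x <+ y → x ≠ y →
      ∑ z ∈ y.sublists.toFinset.filter (fun z => x <+ z), g z y = 0)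
    {u w : Word} (h : u <+ w) : f u w = g u w := by
  by_cases huw : u = w
  · rw [huw, hf₁, hg₁]
  have hu : u ∈ w.sublists.toFinset.filter (fun z => u <+ z) := by simpa using h
  have ih : ∀ z ∈ (w.sublists.toFinset.filter (fun z => u <+ z)).erase u, f z w = g z w :=
    fun z hz => eq_of_sum_sublists_eq_zero hf₁ hf₂ hg₁ hg₂ (by simp_all)
  have hf := hf₂ u w h huw
  have hg := hg₂ u w h huw
  rw [← Finset.add_sum_erase _ _ hu, Finset.sum_congr rfl ih] at hf
  rw [← Finset.add_sum_erase _ _ hu] at hg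
  linarith
termination_by w.length - u.length
decreasing_by
  obtain ⟨hzu, hz, huz⟩ : z ≠ u ∧ z <+ w ∧ u <+ z := by simp_all
  have := hz.length_le
  have := huz.length_le
  have : u.length ≠ z.length := fun e => hzu (huz.eq_of_length e).symm
  omega

theorem mobius_subword_general (μ : Word → Word → ℤ)
    (h1 : ∀ x, μ x x = 1)
    (h2 : ∀ x y : Word, x <+ y → x ≠ y →
      ∑ z ∈ y.sublists.toFinset.filter (fun z => x <+ z), μ z y = 0)
    (u w : Word) (h : u <+ w) :
    μ u w = (-1) ^ (u.length + w.length) * (nCount u w : ℤ) := by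
  refine eq_of_sum_sublists_eq_zero (g := fun z y => (-1) ^ (z.length + y.length) * nCount z y)
    h1 h2 (fun x => ?_) (fun x y _ hxy => ?_) h
  · rw [nCount_self, ← two_mul, pow_mul]
    norm_num
  · have hsum := sum_sublists_sign_mul_nCount x y
    rw [if_neg hxy] at hsum
    simp only [pow_add, mul_right_comm _ ((-1 : ℤ) ^ y.length), ← Finset.sum_mul, hsum, zero_mul]

/-- The Möbius function of the subword order on `{a,b}*` (characterized by its
defining recursion) satisfies `μ(u,w) = (-1)^{|u|+|w|} (w choose u)_n`. -/
theorem mobius_subword (μ : Word → Word → ℤ)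
    (h1 : ∀ x, μ x x = 1)
    (h2 : ∀ x y : Word, x <+ y → x ≠ y →
      ∑ z ∈ y.sublists.toFinset.filter (fun z => x <+ z), μ z y = 0)
    (h3 : ∀ x y : Word, ¬ x <+ y → μ x y = 0)
    (u w : Word) (h : u <+ w) :
    μ u w = (-1) ^ (u.length + w.length) * (nCount u w : ℤ) :=
  mobius_subword_general μ h1 h2 u w h
end

section
/- The poset A*_d of words over {a,b} with no d+1 consecutive b's, under subword order, is locally finite: every interval [u,w] is finite. Moreover, every interval [u,w] with u ≤ w is graded by word length: every maximal chain in [u,w] has length |w| − |u|. -/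
open List

/-- `w` has no `d+1` consecutive `b`'s (i.e. `w ∈ A*_d`). -/
def Avoids (d : ℕ) (w : Word) : Prop :=
  ¬ (List.replicate (d + 1) false <:+: w)

/-- Covering relation in the poset `A*_d`. -/
def CovD (d : ℕ) (x y : Word) : Prop :=
  Avoids d x ∧ Avoids d y ∧ x <+ y ∧ x ≠ y ∧
    ∀ z : Word, Avoids d z → x <+ z → z <+ y → z = x ∨ z = y

/-!
Finiteness is immediate: `[u, w]` consists of subwords of `w`. For gradedness it suffices
that covers in `A*_d` raise the length by exactly one, i.e. that whenever `x < y` in `A*_d`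
some `z ∈ A*_d` with `x ≤ z ≤ y` has `|z| + 1 = |y|`. Such a `z` is obtained from `y` by
deleting one letter, by induction on `y`. Deleting a letter `a` could merge two runs of `b`'s,
so the induction also keeps the leading run of `b`'s in `z` no longer than those of `x` and
`y`; this is what lets a `b` common to `x` and `y` be put back in front of `z`.
-/

def leadingB : Word → ℕ
  | [] => 0
  | true :: _ => 0
  | false :: w => leadingB w + 1

lemma replicate_false_prefix_iff : ∀ {n : ℕ} {w : Word},
    replicate n false <+: w ↔ n ≤ leadingB w
  | 0, _ => by simp
  | n + 1, [] => by simp [leadingB]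
  | n + 1, true :: w => by simp [leadingB, replicate_succ]
  | n + 1, false :: w => by
    simp [leadingB, replicate_succ, replicate_false_prefix_iff]

lemma Avoids.of_cons {d : ℕ} {c : Bool} {w : Word} (h : Avoids d (c :: w)) : Avoids d w :=
  fun hw => h (hw.trans (suffix_cons c w).isInfix)

lemma avoids_true_cons {d : ℕ} {w : Word} : Avoids d (true :: w) ↔ Avoids d w := by
  simp [Avoids, infix_cons_iff, replicate_succ]

lemma avoids_false_cons {d : ℕ} {w : Word} :
    Avoids d (false :: w) ↔ Avoids d w ∧ leadingB w < d := by
  simp [Avoids, infix_cons_iff, replicate_succ, replicate_false_prefix_iff, and_comm]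

lemma exists_avoids_between {d : ℕ} : ∀ {x y : Word}, x <+ y → x ≠ y → Avoids d x → Avoids d y →
    ∃ z, x <+ z ∧ z <+ y ∧ Avoids d z ∧ z.length + 1 = y.length ∧
      leadingB z ≤ max (leadingB x) (leadingB y)
  | _, [], hxy, hne, _, _ => absurd (sublist_nil.mp hxy) hne
  | x, c :: y, hxy, hne, hx, hy => by
    rcases sublist_cons_iff.mp hxy with hsub | ⟨x', rfl, hsub⟩
    · by_cases hx_eq : x = y
      · subst hx_eq
        exact ⟨x, .refl x, sublist_cons_self c x, hx, rfl, le_max_left _ _⟩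
      cases c with
      | false =>
        refine ⟨y, hsub, sublist_cons_self _ _, hy.of_cons, rfl, ?_⟩
        simp only [leadingB]
        omega
      | true =>
        obtain ⟨z, hxz, hzy, hz, hlen, -⟩ := exists_avoids_between hsub hx_eq hx hy.of_cons
        exact ⟨true :: z, hxz.cons true, hzy.cons_cons true, avoids_true_cons.mpr hz,
          by simp [hlen], by simp [leadingB]⟩
    · obtain ⟨z, hxz, hzy, hz, hlen, hlead⟩ :=
        exists_avoids_between hsub (fun h => hne (h ▸ rfl)) hx.of_cons hy.of_cons
      refine ⟨c :: z, hxz.cons_cons c, hzy.cons_cons c, ?_, by simp [hlen], ?_⟩ <;> cases c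
      · have hx' := (avoids_false_cons.mp hx).2
        have hy' := (avoids_false_cons.mp hy).2
        exact avoids_false_cons.mpr ⟨hz, by omega⟩
      · exact avoids_true_cons.mpr hz
      · simp only [leadingB]
        omega
      · simp [leadingB]

lemma CovD.length_succ {d : ℕ} {x y : Word} (h : CovD d x y) : x.length + 1 = y.length := by
  obtain ⟨hx, hy, hxy, hne, hcov⟩ := h
  obtain ⟨z, hxz, hzy, hz, hlen, -⟩ := exists_avoids_between hxy hne hx hy
  rcases hcov z hz hxz hzy with rfl | rfl
  · exact hlen
  · omega

lemma List.IsChain.apply_getLast_add_one {α : Type*} {R : α → α → Prop} {f : α → ℕ}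
    (hR : ∀ x y, R x y → f x + 1 = f y) :
    ∀ {c : List α} {u w : α}, c.IsChain R → c.head? = some u → c.getLast? = some w →
      f w + 1 = f u + c.length
  | [], _, _, _, hu, _ => by simp at hu
  | [x], _, _, _, hu, hw => by simp_all
  | x :: y :: c, u, w, hc, hu, hw => by
    obtain ⟨hxy, hc⟩ := isChain_cons_cons.mp hc
    obtain rfl : x = u := Option.some_inj.mp hu
    have ih := hc.apply_getLast_add_one hR rfl (by simpa using hw)
    have := hR _ _ hxy
    simp only [length_cons] at ih ⊢
    omega

theorem restricted_subword_locally_finite_graded_general (d : ℕ) (u w : Word) :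
    {z : Word | u <+ z ∧ z <+ w ∧ Avoids d z}.Finite ∧
    ∀ c : List Word, c.head? = some u → c.getLast? = some w →
      c.Chain' (CovD d) → c.length = w.length - u.length + 1 := by
  refine ⟨w.sublists.finite_toSet.subset fun z hz => mem_sublists.mpr hz.2.1, ?_⟩
  intro c hu hw hc
  have hlen := IsChain.apply_getLast_add_one (R := CovD d) (f := length)
    (fun _ _ => CovD.length_succ) hc hu hw
  have hc_pos := length_pos_of_mem (mem_of_mem_head? hu)
  omega

/-- `A*_d` is locally finite, and every interval `[u,w]` is graded by length:
every maximal chain from `u` to `w` has length `|w| - |u|` (so it has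
`|w| - |u| + 1` elements). -/
theorem restricted_subword_locally_finite_graded (d : ℕ) (u w : Word)
    (hu : Avoids d u) (hw : Avoids d w) (h : u <+ w) :
    {z : Word | u <+ z ∧ z <+ w ∧ Avoids d z}.Finite ∧
    ∀ c : List Word, c.head? = some u → c.getLast? = some w →
      c.Chain' (CovD d) → c.length = w.length - u.length + 1 :=
  restricted_subword_locally_finite_graded_general d u w
end

section
/- Let A*_d be words over {a,b} avoiding b^{d+1} as a factor, under subword order. If u ≤ w in A*_d and w covers u in A*_d, then w covers u in A* as well; i.e., A*_d is a subposet of A* closed under the property that covering relations in the restricted poset coincide with covering relations of A* between elements of A*_d. -/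
open List

/-- Covering relation in the full subword order `A*`. -/
def CoversA (u w : Word) : Prop :=
  u <+ w ∧ u ≠ w ∧ ∀ v : Word, u <+ v → v <+ w → v = u ∨ v = w

/-
In `A*` a subword `u` of `w` is covered by `w` exactly when `w` has one letter more. If `u < w`
in `A*_d`, split `w = x c y` along the leftmost embedding of `u`, so that `u = x u'` with
`u' ≤ y` and `u'` not starting with `c`. Then `z = x c u'` satisfies `u < z ≤ w` and
`|z| = |u| + 1`. As `c` differs from the letter following it in `z`, every block of `b`'s in `z`
lies in the prefix `x c` of `w` or in the suffix `u'` of `u`, so `z ∈ A*_d`, and minimality of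
`w` forces `z = w`.
-/

namespace List

variable {α : Type*}

theorem infix_or_infix_of_infix_append_cons {l l₁ l₂ : List α} {b : α} (hb : b ∉ l)
    (h : l <:+: l₁ ++ b :: l₂) : l <:+: l₁ ∨ l <:+: l₂ := by
  obtain ⟨s, t, hst⟩ := h
  rcases append_eq_append_iff.mp hst with ⟨r, rfl, -⟩ | ⟨_ | ⟨b', c⟩, hsl, hc⟩
  · exact .inl (infix_append s l r)
  · exact .inl (suffix_append s l |>.isInfix.trans ⟨[], [], by simpa using hsl⟩)
  · obtain ⟨rfl, rfl⟩ : b = b' ∧ l₂ = c ++ t := by simpa using hc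
    rcases append_eq_append_iff.mp hsl with ⟨r, -, rfl⟩ | ⟨_ | ⟨b'', e⟩, -, he⟩
    · simp at hb
    · subst he; simp at hb
    · obtain ⟨-, rfl⟩ : b = b'' ∧ c = e ++ l := by simpa using he
      exact .inr ⟨e, t, by simp⟩

/-- `c` is the first letter of `w` skipped by the leftmost embedding of `u`. -/
theorem Sublist.exists_eq_append_cons_of_ne {u w : List α} (h : u <+ w) (hne : u ≠ w) :
    ∃ x c y u', w = x ++ c :: y ∧ u = x ++ u' ∧ u' <+ y ∧ u'.head? ≠ some c := by
  induction w generalizing u with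
  | nil => exact absurd (sublist_nil.mp h) hne
  | cons c w ih =>
    rcases u with _ | ⟨a, u⟩
    · exact ⟨[], c, w, [], rfl, rfl, nil_sublist w, by simp⟩
    by_cases hac : a = c
    · subst hac
      obtain ⟨x, c', y, u', rfl, rfl, hu', hc'⟩ :=
        ih (cons_sublist_cons.mp h) (fun e => hne (by rw [e]))
      exact ⟨a :: x, c', y, u', rfl, rfl, hu', hc'⟩
    · have hw : a :: u <+ w := by simpa [sublist_cons_iff, hac] using h
      exact ⟨[], c, w, a :: u, rfl, rfl, hw, by simpa using hac⟩

end List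

theorem Avoids.of_infix {d : ℕ} {v w : Word} (hw : Avoids d w) (h : v <:+: w) : Avoids d v :=
  fun hv => hw (hv.trans h)

theorem avoids_append_cons {d : ℕ} {x y u' : Word} {c : Bool} (hw : Avoids d (x ++ c :: y))
    (hu : Avoids d (x ++ u')) (hc : u'.head? ≠ some c) : Avoids d (x ++ c :: u') := by
  have hxc : Avoids d (x ++ [c]) := hw.of_infix ⟨[], y, by simp⟩
  have hu' : Avoids d u' := hu.of_infix (suffix_append x u').isInfix
  have ha : true ∉ replicate (d + 1) false := by simp [mem_replicate]
  intro hz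
  cases c with
  | true =>
    rcases infix_or_infix_of_infix_append_cons ha hz with h | h
    · exact hxc.of_infix (prefix_append x [true]).isInfix h
    · exact hu' h
  | false =>
    rcases u' with _ | ⟨e, u''⟩
    · exact hxc hz
    obtain rfl : e = true := by simpa using hc
    rcases infix_or_infix_of_infix_append_cons ha (l₁ := x ++ [false]) (by simpa using hz)
      with h | h
    · exact hxc h
    · exact hu'.of_infix (suffix_cons true u'').isInfix h

theorem exists_avoids_sublist_length_eq_succ {d : ℕ} {u w : Word} (hu : Avoids d u)
    (hw : Avoids d w) (h : u <+ w) (hne : u ≠ w) :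
    ∃ z, Avoids d z ∧ u <+ z ∧ z <+ w ∧ z.length = u.length + 1 := by
  obtain ⟨x, c, y, u', rfl, rfl, hu', hc⟩ := h.exists_eq_append_cons_of_ne hne
  refine ⟨x ++ c :: u', avoids_append_cons hw hu hc, ?_, ?_, by simp; omega⟩
  · exact (sublist_cons_self c u').append_left x
  · exact (hu'.cons_cons c).append_left x

theorem coversA_of_sublist_of_length_eq_succ {u w : Word} (h : u <+ w)
    (hlen : w.length = u.length + 1) : CoversA u w := by
  refine ⟨h, fun e => by simp [e] at hlen, fun v huv hvw => ?_⟩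
  rcases Nat.lt_or_ge u.length v.length with hlt | hle
  · exact .inr (hvw.eq_of_length (by have := hvw.length_le; omega))
  · exact .inl (huv.eq_of_length (le_antisymm huv.length_le hle)).symm

/-- Covering relations in `A*_d` coincide with covering relations of `A*`
between elements of `A*_d`: if `w` covers `u` in `A*_d` then `w` covers `u`
in `A*`. -/
theorem covD_covers (d : ℕ) (u w : Word) (h : CovD d u w) : CoversA u w := by
  obtain ⟨hu, hw, huw, hne, hmin⟩ := h
  obtain ⟨z, hz, huz, hzw, hlen⟩ := exists_avoids_sublist_length_eq_succ hu hw huw hne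
  rcases hmin z hz huz hzw with rfl | rfl
  · simp at hlen
  · exact coversA_of_sublist_of_length_eq_succ huw hlen
end
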